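/- arXiv:1703.10465 — 2 statements merged into one kernel-verified Lean document; each statement's English description precedes it below -/
import Mathlib

section
/- Let g₁,…,g_k be orientation-preserving homeomorphisms of S¹, let p₁,…,p_k be a probability vector, and suppose μ̃ is a Borel probability measure on S¹ satisfying μ̃ = Σᵢ pᵢ · (μ̃ ∘ gᵢ), i.e. μ̃ is invariant for the iterated function system generated by the inverses g₁⁻¹,…,g_k⁻¹. Define χ(x,y) = min(μ̃([x,y]), μ̃([y,x])) and let U f(x) = Σᵢ pᵢ f(gᵢ(x)) be the dual Markov operator. Then for any function f: S¹ → ℝ with |f(x) − f(y)| ≤ χ(x,y) for all x,y, the function Uf also satisfies |Uf(x) − Uf(y)| ≤ χ(x,y) for all x,y. -/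
open MeasureTheory Filter

abbrev Circle1 := AddCircle (1 : ℝ)

noncomputable def rep (u : Circle1) : ℝ := (AddCircle.equivIco 1 0 u : ℝ)

/-- The closed counterclockwise arc from `x` to `y`. -/
def arc (x y : Circle1) : Set Circle1 := {z | rep (z - x) ≤ rep (y - x)}

noncomputable def chi (μ : Measure Circle1) (x y : Circle1) : ℝ :=
  min (μ (arc x y)).toReal (μ (arc y x)).toReal

/-!
Averaging against the weights `pᵢ` turns the bound `|f(gᵢx) - f(gᵢy)| ≤ χ(gᵢx, gᵢy)` into
`|Uf(x) - Uf(y)| ≤ Σᵢ pᵢ χ(gᵢx, gᵢy)`. Since each `gᵢ` maps the arc `[x,y]` onto `[gᵢx, gᵢy]`,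
both `Σᵢ pᵢ μ̃([gᵢx, gᵢy])` and `Σᵢ pᵢ μ̃([gᵢy, gᵢx])` are the invariance sums for the arcs
`[x,y]` and `[y,x]`, so the average of the minima is at most the minimum of the averages,
which is `χ(x,y)`.
-/

theorem measurable_rep : Measurable rep :=
  measurable_subtype_coe.comp (AddCircle.measurableEquivIco 1 0).measurable

theorem measurableSet_arc (x y : Circle1) : MeasurableSet (arc x y) :=
  (measurable_rep.comp (measurable_id.sub measurable_const)) measurableSet_Iic

theorem abs_sum_mul_sub_sum_mul_le {ι : Type*} [Fintype ι] {p : ι → ℝ} (hp : ∀ i, 0 ≤ p i)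
    (a b : ι → ℝ) : |∑ i, p i * a i - ∑ i, p i * b i| ≤ ∑ i, p i * |a i - b i| := by
  rw [← Finset.sum_sub_distrib]
  calc |∑ i, (p i * a i - p i * b i)| ≤ ∑ i, |p i * a i - p i * b i| :=
        Finset.abs_sum_le_sum_abs _ _
    _ = ∑ i, p i * |a i - b i| := by
        refine Finset.sum_congr rfl fun i _ => ?_
        rw [← mul_sub, abs_mul, abs_of_nonneg (hp i)]

theorem sum_mul_chi_le {ι : Type*} [Fintype ι] {g : ι → Circle1 → Circle1}
    (horient : ∀ i x y, g i '' arc x y = arc (g i x) (g i y))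
    {p : ι → ℝ} (hp : ∀ i, 0 ≤ p i) {μ : Measure Circle1}
    (hinv : ∀ x y, (μ (arc x y)).toReal = ∑ i, p i * (μ (g i '' arc x y)).toReal)
    (x y : Circle1) : ∑ i, p i * chi μ (g i x) (g i y) ≤ chi μ x y := by
  refine le_min ?_ ?_
  · rw [hinv x y]
    refine Finset.sum_le_sum fun i _ => mul_le_mul_of_nonneg_left ?_ (hp i)
    rw [horient]
    exact min_le_left _ _
  · rw [hinv y x]
    refine Finset.sum_le_sum fun i _ => mul_le_mul_of_nonneg_left ?_ (hp i)
    rw [horient]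
    exact min_le_right _ _

theorem dual_operator_chi_nonexpansive_general (k : ℕ)
    (g : Fin k → Homeomorph Circle1 Circle1)
    (horient : ∀ i (x y : Circle1), (g i) '' arc x y = arc (g i x) (g i y))
    (p : Fin k → ℝ) (hp : ∀ i, 0 ≤ p i)
    (μ : Measure Circle1)
    (hinv : ∀ A : Set Circle1, MeasurableSet A →
      (μ A).toReal = ∑ i, p i * (μ ((g i) '' A)).toReal)
    (f : Circle1 → ℝ) (hf : ∀ x y, |f x - f y| ≤ chi μ x y) :
    ∀ x y, |(∑ i, p i * f (g i x)) - (∑ i, p i * f (g i y))| ≤ chi μ x y := by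
  intro x y
  calc |∑ i, p i * f (g i x) - ∑ i, p i * f (g i y)|
      ≤ ∑ i, p i * |f (g i x) - f (g i y)| := abs_sum_mul_sub_sum_mul_le hp _ _
    _ ≤ ∑ i, p i * chi μ (g i x) (g i y) :=
        Finset.sum_le_sum fun i _ => mul_le_mul_of_nonneg_left (hf _ _) (hp i)
    _ ≤ chi μ x y :=
        sum_mul_chi_le (g := fun i => g i) horient hp
          (fun x y => hinv _ (measurableSet_arc x y)) x y

/-- If `μ̃` is invariant for the inverse system, then the dual operator `U` is
nonexpansive for the metric `χ` built from `μ̃`. -/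
theorem dual_operator_chi_nonexpansive (k : ℕ)
    (g : Fin k → Homeomorph Circle1 Circle1)
    (horient : ∀ i (x y : Circle1), (g i) '' arc x y = arc (g i x) (g i y))
    (p : Fin k → ℝ) (hp : ∀ i, 0 ≤ p i) (hp1 : ∑ i, p i = 1)
    (μ : Measure Circle1) [IsProbabilityMeasure μ]
    (hinv : ∀ A : Set Circle1, MeasurableSet A →
      (μ A).toReal = ∑ i, p i * (μ ((g i) '' A)).toReal)
    (f : Circle1 → ℝ) (hf : ∀ x y, |f x - f y| ≤ chi μ x y) :
    ∀ x y, |(∑ i, p i * f (g i x)) - (∑ i, p i * f (g i y))| ≤ chi μ x y :=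
  dual_operator_chi_nonexpansive_general k g horient p hp μ hinv f hf
end

section
/- Let g₁,…,g_k be bijections of a set S, p₁,…,p_k strictly positive reals summing to 1, and μ a probability measure with μ({v}) = Σᵢ pᵢ μ({gᵢ(v)}) for all v ∈ S. If μ has an atom, then the (finite, nonempty) set F = {v : μ({v}) = sup_w μ({w})} of atoms of maximal mass satisfies gᵢ(F) = F for every i. -/
/-!
The mass of an atom is at most `μ univ`, so for `ε > 0` only finitely many atoms have mass
`≥ ε`; hence the supremum `M` of atom masses is attained and `F = {v | μ {v} = M}` is finite.
For `v ∈ F` the identity `M = μ {v} = ∑ pᵢ μ {gᵢ v}` writes `M` as a convex combination of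
masses `≤ M`, so each `μ {gᵢ v}` equals `M`. Thus each `gᵢ` maps the finite set `F` injectively
into itself, hence onto itself.
-/

open MeasureTheory

theorem Finset.eq_of_le_of_sum_mul_eq {ι R : Type*} [Semiring R] [LinearOrder R]
    [IsStrictOrderedRing R] {s : Finset ι} {p y : ι → R} {x : R}
    (hp : ∀ i ∈ s, 0 < p i) (hp1 : ∑ i ∈ s, p i = 1) (hy : ∀ i ∈ s, y i ≤ x)
    (hx : ∑ i ∈ s, p i * y i = x) : ∀ i ∈ s, y i = x := by
  have hle : ∀ i ∈ s, p i * y i ≤ p i * x := fun i hi =>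
    mul_le_mul_of_nonneg_left (hy i hi) (hp i hi).le
  have hsum : ∑ i ∈ s, p i * y i = ∑ i ∈ s, p i * x := by
    rw [hx, ← Finset.sum_mul, hp1, one_mul]
  intro i hi
  exact (hy i hi).antisymm
    (le_of_mul_le_mul_left ((Finset.sum_eq_sum_iff_of_le hle).mp hsum i hi).ge (hp i hi))

namespace MeasureTheory.Measure

theorem finite_setOf_le_measure_singleton {S : Type*} [MeasurableSpace S]
    [MeasurableSingletonClass S] (μ : Measure S) [IsFiniteMeasure μ] {ε : ENNReal} (hε : ε ≠ 0) :
    {v | ε ≤ μ {v}}.Finite := by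
  by_contra h
  exact measure_ne_top μ _ (Set.Infinite.meas_eq_top h ⟨ε, hε, fun _ hv => hv⟩)

theorem exists_measure_singleton_eq_iSup {S : Type*} [MeasurableSpace S]
    [MeasurableSingletonClass S] (μ : Measure S) [IsFiniteMeasure μ] {v₀ : S} (hv₀ : μ {v₀} ≠ 0) :
    ∃ v, μ {v} = ⨆ w, μ {w} := by
  obtain ⟨a, ha, hmax⟩ := Set.exists_max_image _ (fun v => μ {v})
    (finite_setOf_le_measure_singleton μ hv₀) ⟨v₀, le_refl (μ {v₀})⟩
  refine ⟨a, le_antisymm (le_iSup (fun w => μ {w}) a) (iSup_le fun w => ?_)⟩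
  rcases le_or_gt (μ {v₀}) (μ {w}) with hw | hw
  · exact hmax w hw
  · exact hw.le.trans ha

theorem finite_setOf_measure_singleton_eq_iSup {S : Type*} [MeasurableSpace S]
    [MeasurableSingletonClass S] (μ : Measure S) [IsFiniteMeasure μ] {v₀ : S} (hv₀ : μ {v₀} ≠ 0) :
    {v | μ {v} = ⨆ w, μ {w}}.Finite :=
  (finite_setOf_le_measure_singleton μ
    (ne_bot_of_le_ne_bot hv₀ (le_iSup (fun w => μ {w}) v₀))).subset fun _ hv => hv.ge

theorem measure_singleton_apply_eq_of_eq_iSup {S ι : Type*} [Fintype ι] [MeasurableSpace S]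
    (μ : Measure S) [IsFiniteMeasure μ] (g : ι → S → S) {p : ι → ℝ}
    (hp : ∀ i, 0 < p i) (hp1 : ∑ i, p i = 1)
    (hinv : ∀ v, (μ {v}).toReal = ∑ i, p i * (μ {g i v}).toReal)
    {v : S} (hv : μ {v} = ⨆ w, μ {w}) (i : ι) : μ {g i v} = μ {v} := by
  have hle : ∀ j ∈ Finset.univ, (μ {g j v}).toReal ≤ (μ {v}).toReal := fun j _ =>
    ENNReal.toReal_mono (measure_ne_top μ _) (hv ▸ le_iSup (fun w => μ {w}) (g j v))
  have heq := Finset.eq_of_le_of_sum_mul_eq (fun j _ => hp j) hp1 hle (hinv v).symm i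
    (Finset.mem_univ i)
  exact (ENNReal.toReal_eq_toReal_iff' (measure_ne_top μ _) (measure_ne_top μ _)).mp heq

end MeasureTheory.Measure

/-- If a measure satisfying `μ({v}) = Σᵢ pᵢ μ({gᵢ(v)})` has an atom, then the finite
nonempty set of atoms of maximal mass is invariant under every `gᵢ`. -/
theorem maximal_atoms_invariant {S : Type*} [MeasurableSpace S] [MeasurableSingletonClass S]
    (k : ℕ) (g : Fin k → S ≃ S)
    (p : Fin k → ℝ) (hp : ∀ i, 0 < p i) (hp1 : ∑ i, p i = 1)
    (μ : Measure S) [IsProbabilityMeasure μ]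
    (hinv : ∀ v : S, (μ {v}).toReal = ∑ i, p i * (μ {g i v}).toReal)
    (hatom : ∃ v : S, 0 < μ {v}) :
    (({v : S | μ {v} = ⨆ w : S, μ {w}}).Finite ∧
      ({v : S | μ {v} = ⨆ w : S, μ {w}}).Nonempty) ∧
    ∀ i, (g i) '' {v : S | μ {v} = ⨆ w : S, μ {w}} = {v : S | μ {v} = ⨆ w : S, μ {w}} := by
  obtain ⟨v₀, hv₀⟩ := hatom
  have hfin := Measure.finite_setOf_measure_singleton_eq_iSup μ hv₀.ne'
  refine ⟨⟨hfin, Measure.exists_measure_singleton_eq_iSup μ hv₀.ne'⟩, fun i => ?_⟩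
  have hmaps : Set.MapsTo (g i) {v | μ {v} = ⨆ w, μ {w}} {v | μ {v} = ⨆ w, μ {w}} :=
    fun v hv =>
      (Measure.measure_singleton_apply_eq_of_eq_iSup μ (fun j => g j) hp hp1 hinv hv i).trans hv
  exact ((hfin.injOn_iff_bijOn_of_mapsTo hmaps).mp (g i).injective.injOn).image_eq
end
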